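/- (Posetal uniformity AU2 of the trace in Rel.) Let f : (S ⊕ X) → (S ⊕ Y) → Prop, g : (T ⊕ X) → (T ⊕ Y) → Prop and r : T → S → Prop. If Relation.Comp (r ⊕ᵣ (Eq : X → X → Prop)) f ≤ Relation.Comp g (r ⊕ᵣ (Eq : Y → Y → Prop)) (pointwise), then trRel f ≤ trRel g. -/

import Mathlib

/-- The canonical trace of the monoidal category `(Rel, ⊕, 0)`. -/
def trRel {S X Y : Type*} (f : (S ⊕ X) → (S ⊕ Y) → Prop) : X → Y → Prop :=
  fun x y =>
    f (Sum.inr x) (Sum.inr y) ∨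
    ∃ s t, f (Sum.inr x) (Sum.inl s) ∧
      Relation.ReflTransGen (fun s s' => f (Sum.inl s) (Sum.inl s')) s t ∧
      f (Sum.inl t) (Sum.inr y)

/-- Sum (biproduct) of relations. -/
def sumRel {S T X Y : Type*} (r : S → T → Prop) (q : X → Y → Prop) :
    (S ⊕ X) → (T ⊕ Y) → Prop
  | Sum.inl s, Sum.inl t => r s t
  | Sum.inr x, Sum.inr y => q x y
  | _, _ => False

/-!
Read the hypothesis as a simulation: every step of `f` out of a state `s : S`, or out of an
input `x : X`, is matched by a step of `g` out of any `t` with `r t s`, resp. out of `x`, whose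
target is again `r`-related to the target of the `f`-step (or equal to it, in `Y`). Induction
along a trace path of `f`, from `X` through `S` to `Y`, then yields a trace path of `g` with the
same endpoints.
-/

theorem Relation.comp_reflTransGen_le_of_comp_le {α β : Type*} {R : β → α → Prop}
    {F : α → α → Prop} {G : β → β → Prop} (h : Relation.Comp R F ≤ Relation.Comp G R) :
    Relation.Comp R (Relation.ReflTransGen F) ≤ Relation.Comp (Relation.ReflTransGen G) R := by
  rintro t s' ⟨s, hts, hss'⟩
  induction hss' with
  | refl => exact ⟨t, .refl, hts⟩
  | tail _ hstep ih =>
    obtain ⟨t', htt', ht's⟩ := ih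
    obtain ⟨t'', ht't'', ht''s⟩ := h _ _ ⟨_, ht's, hstep⟩
    exact ⟨t'', htt'.tail ht't'', ht''s⟩

section sumRel

variable {S T X Y Z : Type*}

theorem comp_sumRel_inl {g : Z → T ⊕ Y → Prop} {r : T → S → Prop} {q : Y → X → Prop} {a : Z}
    {s : S} : Relation.Comp g (sumRel r q) a (.inl s) ↔ ∃ t, g a (.inl t) ∧ r t s := by
  simp [Relation.Comp, Sum.exists, sumRel]

theorem comp_sumRel_inr {g : Z → T ⊕ Y → Prop} {r : T → S → Prop} {q : Y → X → Prop} {a : Z}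
    {x : X} : Relation.Comp g (sumRel r q) a (.inr x) ↔ ∃ y, g a (.inr y) ∧ q y x := by
  simp [Relation.Comp, Sum.exists, sumRel]

theorem sumRel_comp_inl {r : T → S → Prop} {p : Y → X → Prop} {f : S ⊕ X → Z → Prop} {t : T}
    {b : Z} : Relation.Comp (sumRel r p) f (.inl t) b ↔ ∃ s, r t s ∧ f (.inl s) b := by
  simp [Relation.Comp, Sum.exists, sumRel]

theorem sumRel_comp_inr {r : T → S → Prop} {p : Y → X → Prop} {f : S ⊕ X → Z → Prop} {y : Y}
    {b : Z} : Relation.Comp (sumRel r p) f (.inr y) b ↔ ∃ x, p y x ∧ f (.inr x) b := by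
  simp [Relation.Comp, Sum.exists, sumRel]

end sumRel

theorem trRel_uniform_AU2 {S T X Y : Type*}
    (f : (S ⊕ X) → (S ⊕ Y) → Prop) (g : (T ⊕ X) → (T ⊕ Y) → Prop)
    (r : T → S → Prop)
    (h : Relation.Comp (sumRel r (Eq : X → X → Prop)) f ≤
      Relation.Comp g (sumRel r (Eq : Y → Y → Prop))) :
    trRel f ≤ trRel g := by
  have loop : Relation.Comp r (fun s s' => f (.inl s) (.inl s')) ≤
      Relation.Comp (fun t t' => g (.inl t) (.inl t')) r :=
    fun t s' hts' => comp_sumRel_inl.1 (h _ _ (sumRel_comp_inl.2 hts'))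
  rintro x y (hxy | ⟨s, s', hxs, hss', hs'y⟩)
  · obtain ⟨_, hgxy, rfl⟩ := comp_sumRel_inr.1 (h _ _ (sumRel_comp_inr.2 ⟨x, rfl, hxy⟩))
    exact .inl hgxy
  · obtain ⟨t, hxt, hts⟩ := comp_sumRel_inl.1 (h _ _ (sumRel_comp_inr.2 ⟨x, rfl, hxs⟩))
    obtain ⟨t', htt', ht's'⟩ :=
      Relation.comp_reflTransGen_le_of_comp_le loop _ _ ⟨s, hts, hss'⟩
    obtain ⟨_, ht'y, rfl⟩ := comp_sumRel_inr.1 (h _ _ (sumRel_comp_inl.2 ⟨s', ht's', hs'y⟩))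
    exact .inr ⟨t, t', hxt, htt', ht'y⟩
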